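/- Let χ_{E,V}(n) denote the number of proper colorings of a finite hypergraph (E,V) with n colors (maps V → Fin n with no edge monochromatic). Then for all natural numbers n, m: χ_{E,V}(n+m) = Σ_{U ⊆ V} χ_{E|U, U}(n) · χ_{E|U^c, U^c}(m), where the sum is over all subsets U of V and U^c = V \ U. -/

import Mathlib

/-- A proper coloring of a hypergraph `h : E → Set V`: no edge is monochromatic. -/
def Proper {E V C : Type*} (h : E → Set V) (c : V → C) : Prop :=
  ∀ e : E, ∃ u ∈ h e, ∃ v ∈ h e, c u ≠ c v

/-- Number of proper colorings with `n` colors. -/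
noncomputable def chrom {E V : Type*} (h : E → Set V) (n : ℕ) : ℕ :=
  Nat.card {c : V → Fin n // Proper h c}

/-- Restriction of a hypergraph to a vertex subset `U`. -/
def restrictH {E V : Type*} (h : E → Set V) (U : Set V) :
    {e : E // h e ⊆ U} → Set U :=
  fun e => {v : U | (v : V) ∈ h e.1}

/-! Identify `Fin (n + m)` with `Fin n ⊕ Fin m`. A coloring with values in a sum splits the
vertices into the set `U` of those colored from the first summand and its complement. Colors
from different summands differ, so an edge meeting both `U` and `Uᶜ` is never monochromatic;
hence the coloring is proper exactly when its restrictions to the hypergraphs induced on `U`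
and on `Uᶜ` are. -/

open Function

section
variable {E V C D α β : Type*}

lemma proper_comp_iff (h : E → Set V) {f : C → D} (hf : Injective f) (c : V → C) :
    Proper h (f ∘ c) ↔ Proper h c := by
  simp only [Proper, comp_apply, hf.ne_iff]

lemma card_proper_congr (h : E → Set V) (e : C ≃ D) :
    Nat.card {c : V → C // Proper h c} = Nat.card {c : V → D // Proper h c} :=
  Nat.card_congr <| ((Equiv.refl V).arrowCongr e).subtypeEquiv fun c =>
    (proper_comp_iff h e.injective c).symm

lemma proper_restrictH_domRestrict_iff (h : E → Set V) (U : Set V) (c : V → C) :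
    Proper (restrictH h U) (U.domRestrict c) ↔
      ∀ e, h e ⊆ U → ∃ u ∈ h e, ∃ v ∈ h e, c u ≠ c v := by
  constructor
  · intro hc e he
    obtain ⟨u, hu, v, hv, huv⟩ := hc ⟨e, he⟩
    exact ⟨u, hu, v, hv, huv⟩
  · rintro hc ⟨e, he⟩
    obtain ⟨u, hu, v, hv, huv⟩ := hc e he
    exact ⟨⟨u, he hu⟩, hu, ⟨v, he hv⟩, hv, huv⟩

lemma proper_iff_restrictH_of_separates (h : E → Set V) {U : Set V} {c : V → C}
    (hU : ∀ u ∈ U, ∀ v ∉ U, c u ≠ c v) :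
    Proper h c ↔
      Proper (restrictH h U) (U.domRestrict c) ∧ Proper (restrictH h Uᶜ) (Uᶜ.domRestrict c) := by
  rw [proper_restrictH_domRestrict_iff, proper_restrictH_domRestrict_iff]
  refine ⟨fun hc => ⟨fun e _ => hc e, fun e _ => hc e⟩, fun ⟨hin, hout⟩ e => ?_⟩
  by_cases he : h e ⊆ U
  · exact hin e he
  by_cases he' : h e ⊆ Uᶜ
  · exact hout e he'
  obtain ⟨u, hu, huU⟩ := Set.not_subset.1 he
  obtain ⟨v, hv, hvU⟩ := Set.not_subset.1 he'
  exact ⟨v, hv, u, hu, hU v (not_not.1 hvU) u huU⟩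

open Classical in
noncomputable def sumFiberEquiv (U : Set V) :
    {g : V → α ⊕ β // ∀ v, (g v).isLeft ↔ v ∈ U} ≃ (U → α) × (↥Uᶜ → β) where
  toFun g := (fun u => (g.1 u).getLeft ((g.2 u).2 u.2),
    fun u => (g.1 u).getRight (Sum.not_isLeft.1 (mt (g.2 u).1 u.2)))
  invFun p := ⟨fun v => if hv : v ∈ U then .inl (p.1 ⟨v, hv⟩) else .inr (p.2 ⟨v, hv⟩),
    fun v => by by_cases hv : v ∈ U <;> simp [hv]⟩
  left_inv g := by
    ext v
    by_cases hv : v ∈ U <;> simp [hv]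
  right_inv p := by
    ext u
    · simp [u.2]
    · simp [show (u : V) ∉ U from u.2]

lemma proper_iff_sumFiberEquiv (h : E → Set V) {U : Set V}
    (g : {g : V → α ⊕ β // ∀ v, (g v).isLeft ↔ v ∈ U}) :
    Proper h g.1 ↔ Proper (restrictH h U) (sumFiberEquiv U g).1 ∧
      Proper (restrictH h Uᶜ) (sumFiberEquiv U g).2 := by
  have hsep : ∀ u ∈ U, ∀ v ∉ U, g.1 u ≠ g.1 v := fun u hu v hv huv =>
    hv ((g.2 v).1 (huv ▸ (g.2 u).2 hu))
  have hin : U.domRestrict g.1 = Sum.inl ∘ (sumFiberEquiv U g).1 := by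
    ext u; simp [sumFiberEquiv]
  have hout : Uᶜ.domRestrict g.1 = Sum.inr ∘ (sumFiberEquiv U g).2 := by
    ext u; simp [sumFiberEquiv]
  rw [proper_iff_restrictH_of_separates h hsep, hin, hout, proper_comp_iff _ Sum.inl_injective,
    proper_comp_iff _ Sum.inr_injective]

lemma card_proper_sum [Fintype V] [Finite α] [Finite β] (h : E → Set V) :
    Nat.card {g : V → α ⊕ β // Proper h g} =
      ∑ U : Finset V, Nat.card {c : ↥(U : Set V) → α // Proper (restrictH h U) c} *
        Nat.card {c : ↥(U : Set V)ᶜ → β // Proper (restrictH h (U : Set V)ᶜ) c} := by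
  let inlSet (g : V → α ⊕ β) : Finset V := Finset.univ.filter fun v => (g v).isLeft
  rw [← Nat.card_congr (Equiv.sigmaFiberEquiv fun g : {g // Proper h g} => inlSet g.1),
    Nat.card_sigma]
  refine Finset.sum_congr rfl fun U _ => ?_
  rw [← Nat.card_prod]
  refine Nat.card_congr <|
    (Equiv.subtypeSubtypeEquivSubtypeInter (Proper h) fun g => inlSet g = U).trans <|
    (Equiv.subtypeEquivRight fun g => ?_).trans <|
    (Equiv.subtypeSubtypeEquivSubtypeInter _ _).symm.trans <|
    ((sumFiberEquiv _).subtypeEquiv (proper_iff_sumFiberEquiv h)).trans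
      Equiv.subtypeProdEquivProd
  simp [inlSet, Finset.ext_iff, and_comm]

end

theorem chrom_add_general {E V : Type*} [Fintype V]
    (h : E → Set V) (n m : ℕ) :
    chrom h (n + m) =
      ∑ U : Finset V,
        chrom (restrictH h (↑U : Set V)) n * chrom (restrictH h ((↑U : Set V))ᶜ) m := by
  rw [chrom, card_proper_congr h finSumFinEquiv.symm, card_proper_sum]
  rfl

/-- `χ_{E,V}(n+m) = Σ_{U ⊆ V} χ_{E|U,U}(n) · χ_{E|Uᶜ,Uᶜ}(m)`. -/
theorem chrom_add {E V : Type*} [Fintype E] [Fintype V] [DecidableEq V]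
    (h : E → Set V) (n m : ℕ) :
    chrom h (n + m) =
      ∑ U : Finset V,
        chrom (restrictH h (↑U : Set V)) n * chrom (restrictH h ((↑U : Set V))ᶜ) m :=
  chrom_add_general h n m
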